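/- arXiv:2605.21194 — 5 statements merged into one kernel-verified Lean document; each statement's English description precedes it below -/
import Mathlib

section
/- The class of functions possessing a uniform modulus of computation is downward closed under Turing reducibility: if f has a uniform modulus of computation and f' ≤_T f, then f' has a uniform modulus of computation. -/
open Filter

namespace Paper

/-- Codes for oracle Turing machines (relativized partial recursive functions). -/
inductive OCode : Type
  | oracle : OCode
  | zero : OCode
  | succ : OCode
  | left : OCode
  | right : OCode
  | pair : OCode → OCode → OCode
  | comp : OCode → OCode → OCode
  | prec : OCode → OCode → OCode
  | rfind' : OCode → OCode

/-- Evaluation of an oracle code relative to an oracle `O`. -/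
def evalo (O : ℕ →. ℕ) : OCode → ℕ →. ℕ
  | .oracle => O
  | .zero => fun _ => Part.some 0
  | .succ => fun n => Part.some (n + 1)
  | .left => fun n => Part.some n.unpair.1
  | .right => fun n => Part.some n.unpair.2
  | .pair cf cg => fun n => Nat.pair <$> evalo O cf n <*> evalo O cg n
  | .comp cf cg => fun n => evalo O cg n >>= evalo O cf
  | .prec cf cg => Nat.unpaired fun a n =>
      n.rec (evalo O cf a) fun y IH => do
        let i ← IH
        evalo O cg (Nat.pair a (Nat.pair y i))
  | .rfind' cf => Nat.unpaired fun a m =>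
      (Nat.rfind fun n => (fun x => x = 0) <$> evalo O cf (Nat.pair a (n + m))).map (· + m)

/-- Turing reducibility for total functions. -/
def TRed (f g : ℕ → ℕ) : Prop := ∃ c : OCode, evalo (g : ℕ →. ℕ) c = (f : ℕ →. ℕ)

/-- `g` is a uniform modulus of computation for `f`. -/
def UniformModulus (g f : ℕ → ℕ) : Prop :=
  ∃ c : OCode, ∀ h : ℕ → ℕ, (∀ i, g i ≤ h i) → evalo (h : ℕ →. ℕ) c = (f : ℕ →. ℕ)

def OCode.subst : OCode → OCode → OCode
  | .oracle, d => d
  | .zero, _ => .zero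
  | .succ, _ => .succ
  | .left, _ => .left
  | .right, _ => .right
  | .pair cf cg, d => .pair (cf.subst d) (cg.subst d)
  | .comp cf cg, d => .comp (cf.subst d) (cg.subst d)
  | .prec cf cg, d => .prec (cf.subst d) (cg.subst d)
  | .rfind' cf, d => .rfind' (cf.subst d)

theorem evalo_subst (O : ℕ →. ℕ) (c d : OCode) :
    evalo O (c.subst d) = evalo (evalo O d) c := by
  induction c with
  | oracle | zero | succ | left | right => rfl
  | pair cf cg ihf ihg | comp cf cg ihf ihg | prec cf cg ihf ihg =>
    simp only [OCode.subst, evalo, ihf, ihg]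
    rfl
  | rfind' cf ih =>
    simp only [OCode.subst, evalo, ih]
    rfl

theorem UniformModulus.of_tRed {g f f' : ℕ → ℕ} (hg : UniformModulus g f) (hred : TRed f' f) :
    UniformModulus g f' := by
  obtain ⟨c, hc⟩ := hg
  obtain ⟨c', hc'⟩ := hred
  exact ⟨c'.subst c, fun h hh => by rw [evalo_subst, hc h hh, hc']⟩

end Paper

/-- functions with a uniform modulus of computation are closed
downwards under Turing reducibility. -/
theorem uniformModulus_downward_closed (f f' : ℕ → ℕ)
    (hf : ∃ g : ℕ → ℕ, Paper.UniformModulus g f)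
    (hred : Paper.TRed f' f) :
    ∃ g' : ℕ → ℕ, Paper.UniformModulus g' f' := by
  obtain ⟨g, hg⟩ := hf
  exact ⟨g, hg.of_tRed hred⟩
end

section
/- Any function f that dominates every computable function can compute a list of the computable functions: there is an f-computable sequence ⟨x_n⟩_{n∈ω} of elements of ω^ω such that {x_n : n ∈ ω} is exactly the set of total computable functions. -/
open Filter

/-!
Column `(c, s)` of the list runs the code `c` on each `j ≤ k` for `max (f j) s` steps and
outputs the value of `c` at `k` if all these runs converge, `0` otherwise. Each column is
therefore either `φ_c` or eventually `0`, hence computable. Conversely, if `c` computes a total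
`g`, its halting time is computable, so `f` dominates it, and a large enough constant `s` makes
every run of column `(c, s)` converge: that column is `g`. The value at `k` only queries `f`
below `k + 1`, so the list is `f`-computable.
-/

open Nat.Partrec (Code)
open Nat.Partrec.Code
open Encodable Denumerable

theorem Computable.of_eventually_eq {f g : ℕ → ℕ} (hg : Computable g)
    (h : ∀ᶠ n in atTop, g n = f n) : Computable f := by
  obtain ⟨N, hN⟩ := eventually_atTop.mp h
  have hlist : Computable fun n => ((List.range N).map f)[n]?.getD (g n) :=
    Computable.option_getD (Computable.list_getElem?.comp (Computable.const _) Computable.id) hg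
  refine hlist.of_eq fun n => ?_
  rcases lt_or_ge n N with hn | hn
  · simp [hn]
  · simp [hn, hN n hn]

theorem exists_le_max_of_eventually_le {t f : ℕ → ℕ} (h : ∀ᶠ n in atTop, t n ≤ f n) :
    ∃ s, ∀ n, t n ≤ max (f n) s := by
  obtain ⟨N, hN⟩ := eventually_atTop.mp h
  refine ⟨(Finset.range N).sup t, fun n => ?_⟩
  rcases lt_or_ge n N with hn | hn
  · exact le_max_of_le_right (Finset.le_sup (Finset.mem_range.mpr hn))
  · exact le_max_of_le_left (hN n hn)

namespace Nat.Partrec.Code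

theorem getD_evaln_mem_eval {k : ℕ} {c : Code} {n : ℕ} (h : (evaln k c n).isSome) :
    (evaln k c n).getD 0 ∈ eval c n := by
  obtain ⟨v, hv⟩ := Option.isSome_iff_exists.mp h
  simpa [hv] using evaln_sound (hv ▸ rfl : v ∈ evaln k c n)

theorem exists_computable_haltingTime {c : Code} (hc : ∀ n, (eval c n).Dom) :
    ∃ t : ℕ → ℕ, Computable t ∧ ∀ n, (evaln (t n) c n).isSome := by
  have hex : ∀ n, ∃ k, (evaln k c n).isSome := fun n => by
    obtain ⟨k, hk⟩ := evaln_complete.mp (Part.get_mem (hc n))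
    exact ⟨k, Option.isSome_iff_exists.mpr ⟨_, hk⟩⟩
  refine ⟨fun n => Nat.find (hex n), Computable.find ?_ hex, fun n => Nat.find_spec (hex n)⟩
  have hhalts : Primrec fun q : ℕ × ℕ => (evaln q.2 c q.1).isSome :=
    Primrec.option_isSome.comp (primrec_evaln.comp
      ((Primrec.snd.pair (_root_.Primrec.const c)).pair Primrec.fst))
  exact (Primrec.eq.comp hhalts (_root_.Primrec.const true)).computablePred

end Nat.Partrec.Code

namespace Paper

def OCode.ofCode : Code → OCode
  | .zero => .zero
  | .succ => .succ
  | .left => .left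
  | .right => .right
  | .pair cf cg => .pair (ofCode cf) (ofCode cg)
  | .comp cf cg => .comp (ofCode cf) (ofCode cg)
  | .prec cf cg => .prec (ofCode cf) (ofCode cg)
  | .rfind' cf => .rfind' (ofCode cf)

theorem evalo_ofCode (O : ℕ →. ℕ) (c : Code) : evalo O (OCode.ofCode c) = eval c := by
  induction c with
  | zero | succ | left | right => rfl
  | pair _ _ ihf ihg | comp _ _ ihf ihg | prec _ _ ihf ihg =>
    simp only [OCode.ofCode, evalo, eval, ihf, ihg]; rfl
  | rfind' _ ihf => simp only [OCode.ofCode, evalo, eval, ihf]; rfl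

namespace TRed

variable {F a b h : ℕ → ℕ}

theorem of_eq {g : ℕ → ℕ} (hh : TRed h F) (e : ∀ n, h n = g n) : TRed g F :=
  funext e ▸ hh

theorem of_computable (hh : Computable h) : TRed h F := by
  obtain ⟨c, hc⟩ := exists_code.mp (Partrec.nat_iff.mp hh)
  exact ⟨.ofCode c, (evalo_ofCode _ c).trans hc⟩

theorem refl (F : ℕ → ℕ) : TRed F F := ⟨.oracle, rfl⟩

theorem comp (hh : TRed h F) (ha : TRed a F) : TRed (fun n => h (a n)) F := by
  obtain ⟨ch, eh⟩ := hh
  obtain ⟨ca, ea⟩ := ha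
  refine ⟨.comp ch ca, funext fun n => ?_⟩
  simp only [evalo, eh, ea, PFun.coe_val]
  exact Part.bind_some _ _

theorem pair (ha : TRed a F) (hb : TRed b F) : TRed (fun n => Nat.pair (a n) (b n)) F := by
  obtain ⟨ca, ea⟩ := ha
  obtain ⟨cb, eb⟩ := hb
  exact ⟨.pair ca cb, funext fun n => by simp [evalo, ea, eb, PFun.coe_val, Seq.seq]⟩

theorem prec (ha : TRed a F) (hb : TRed b F) :
    TRed (fun n => Nat.rec (motive := fun _ => ℕ) (a n.unpair.1)
      (fun y ih => b (Nat.pair n.unpair.1 (Nat.pair y ih))) n.unpair.2) F := by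
  obtain ⟨ca, ea⟩ := ha
  obtain ⟨cb, eb⟩ := hb
  refine ⟨.prec ca cb, funext fun n => ?_⟩
  simp only [evalo, Nat.unpaired, ea, eb, PFun.coe_val]
  induction n.unpair.2 with
  | zero => rfl
  | succ k ih => simp only at ih ⊢; rw [ih]; simp

theorem comp₂ {u : ℕ → ℕ → ℕ} (hu : Computable₂ u) (ha : TRed a F) (hb : TRed b F) :
    TRed (fun n => u (a n) (b n)) F := by
  have hu' : Computable fun n : ℕ => u n.unpair.1 n.unpair.2 :=
    hu.comp (Computable.fst.comp Computable.unpair) (Computable.snd.comp Computable.unpair)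
  simpa using (of_computable hu').comp (ha.pair hb)

theorem initialSegment (F : ℕ → ℕ) : TRed (fun n => encode ((List.range n).map F)) F := by
  have happend : Computable₂ fun (v l : ℕ) => encode (ofNat (List ℕ) l ++ [v]) :=
    Computable.encode.comp₂ <| Computable.list_concat.comp₂
      ((Computable.ofNat (List ℕ)).comp Computable.snd) Computable.fst
  have hstep : TRed (fun q => encode
      (ofNat (List ℕ) q.unpair.2.unpair.2 ++ [F q.unpair.2.unpair.1])) F :=
    comp₂ happend ((refl F).comp (of_computable (Primrec.fst.comp
      (Primrec.unpair.comp (Primrec.snd.comp Primrec.unpair))).to_comp))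
      (of_computable (Primrec.snd.comp
        (Primrec.unpair.comp (Primrec.snd.comp Primrec.unpair))).to_comp)
  have hrec := (prec (of_computable (Computable.const (encode ([] : List ℕ)))) hstep).comp
    (of_computable (Primrec₂.natPair.comp (Primrec.const 0) Primrec.id).to_comp)
  refine hrec.of_eq fun n => ?_
  simp only [Nat.unpair_pair, id]
  induction n with
  | zero => rfl
  | succ n ih =>
    simp only [ih, ofNat_encode, List.range_succ, List.map_append, List.map_singleton]

theorem of_initialSegment {u : ℕ → List ℕ → ℕ} {b : ℕ → ℕ} (hu : Computable₂ u)
    (hb : Computable b) (hh : ∀ m, h m = u m ((List.range (b m)).map F)) : TRed h F := by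
  have hu' : Computable₂ fun (m l : ℕ) => u m (ofNat (List ℕ) l) :=
    hu.comp₂ Computable.fst ((Computable.ofNat (List ℕ)).comp Computable.snd)
  refine (comp₂ hu' (of_computable Computable.id)
    ((initialSegment F).comp (of_computable hb))).of_eq fun m => ?_
  simp [hh]

end TRed

def boundedRun (F : ℕ → ℕ) (p : Code × ℕ) (j : ℕ) : Option ℕ := evaln (max (F j) p.2) p.1 j

def column (F : ℕ → ℕ) (p : Code × ℕ) (k : ℕ) : ℕ :=
  if ∀ j ≤ k, (boundedRun F p j).isSome then (boundedRun F p k).getD 0 else 0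

def listing (F : ℕ → ℕ) (m : ℕ) : ℕ := column F (ofNat (Code × ℕ) m.unpair.1) m.unpair.2

theorem column_congr {F G : ℕ → ℕ} (p : Code × ℕ) {k : ℕ} (h : ∀ j ≤ k, F j = G j) :
    column F p k = column G p k := by
  have hrun : ∀ j ≤ k, boundedRun F p j = boundedRun G p j := fun j hj => by
    simp only [boundedRun, h j hj]
  simp only [column, hrun _ le_rfl]
  exact if_congr (forall₂_congr fun j hj => by rw [hrun j hj]) rfl rfl

theorem computable₂_column_getD : Computable₂ fun (m : ℕ) (l : List ℕ) =>
    column (l.getD · 0) (ofNat (Code × ℕ) m.unpair.1) m.unpair.2 := by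
  have hrun : Primrec₂ fun (a : ℕ × List ℕ) (j : ℕ) =>
      boundedRun (a.2.getD · 0) (ofNat (Code × ℕ) a.1.unpair.1) j := by
    have hp : Primrec fun a : ℕ × List ℕ => ofNat (Code × ℕ) a.1.unpair.1 :=
      (Primrec.ofNat _).comp (Primrec.fst.comp (Primrec.unpair.comp Primrec.fst))
    have hfuel : Primrec₂ fun (a : ℕ × List ℕ) (j : ℕ) =>
        max (a.2.getD j 0) (ofNat (Code × ℕ) a.1.unpair.1).2 :=
      Primrec.nat_max.comp ((Primrec.list_getD 0).comp (Primrec.snd.comp Primrec.fst)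
        Primrec.snd) (Primrec.snd.comp (hp.comp Primrec.fst))
    exact primrec_evaln.comp ((Primrec.pair hfuel (Primrec.fst.comp (hp.comp Primrec.fst))).pair
      Primrec.snd)
  have hhalts : PrimrecRel fun (j : ℕ) (a : ℕ × List ℕ) =>
      (boundedRun (a.2.getD · 0) (ofNat (Code × ℕ) a.1.unpair.1) j).isSome :=
    Primrec.eq.comp (Primrec.option_isSome.comp (hrun.comp Primrec.snd Primrec.fst))
      (Primrec.const true)
  have hk : Primrec fun a : ℕ × List ℕ => a.1.unpair.2 :=
    Primrec.snd.comp (Primrec.unpair.comp Primrec.fst)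
  have hall : PrimrecPred fun a : ℕ × List ℕ =>
      ∀ j ≤ a.1.unpair.2, (boundedRun (a.2.getD · 0) (ofNat (Code × ℕ) a.1.unpair.1) j).isSome :=
    ((PrimrecRel.forall_mem_list hhalts).comp
      (Primrec.list_range.comp (Primrec.succ.comp hk)) Primrec.id).of_eq
      fun a => by simp only [List.mem_range, Nat.lt_succ_iff, id]
  exact (Primrec.ite hall (Primrec.option_getD.comp (hrun.comp Primrec.id hk)
    (Primrec.const 0)) (Primrec.const 0)).to_comp

theorem tred_listing (F : ℕ → ℕ) : TRed (listing F) F := by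
  refine TRed.of_initialSegment computable₂_column_getD
    (Primrec.succ.comp (Primrec.snd.comp Primrec.unpair)).to_comp fun m => ?_
  refine column_congr _ fun j hj => ?_
  rw [List.getD_eq_getElem _ _ (by simpa using Nat.lt_succ_of_le hj)]
  simp

theorem computable_column (F : ℕ → ℕ) (p : Code × ℕ) : Computable (column F p) := by
  by_cases hall : ∀ j, (boundedRun F p j).isSome
  · have hmem : ∀ k, column F p k ∈ eval p.1 k := fun k => by
      rw [column, if_pos fun j _ => hall j]
      exact getD_evaln_mem_eval (hall k)
    exact Partrec.of_eq_tot (Partrec.nat_iff.mpr (exists_code.mpr ⟨p.1, rfl⟩)) hmem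
  · push Not at hall
    obtain ⟨j, hj⟩ := hall
    refine (Computable.const 0).of_eventually_eq (eventually_atTop.mpr ⟨j, fun k hk => ?_⟩)
    rw [column, if_neg fun h => hj (h j hk)]

theorem column_eq {F g : ℕ → ℕ} {c : Code} {s : ℕ} (hc : eval c = g)
    (h : ∀ j, (boundedRun F (c, s) j).isSome) : column F (c, s) = g := by
  funext k
  have hk := getD_evaln_mem_eval (h k)
  rw [hc, PFun.coe_val, Part.mem_some_iff] at hk
  rw [column, if_pos fun j _ => h j]
  exact hk

theorem exists_column_eq_of_computable {f g : ℕ → ℕ}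
    (hdom : ∀ t : ℕ → ℕ, Computable t → ∀ᶠ i in atTop, t i ≤ f i) (hg : Computable g) :
    ∃ p, column f p = g := by
  obtain ⟨c, hc⟩ := exists_code.mp (Partrec.nat_iff.mp hg)
  obtain ⟨t, ht, htc⟩ := exists_computable_haltingTime (c := c) (by simp [hc])
  obtain ⟨s, hs⟩ := exists_le_max_of_eventually_le (hdom t ht)
  refine ⟨(c, s), column_eq hc fun j => ?_⟩
  obtain ⟨v, hv⟩ := Option.isSome_iff_exists.mp (htc j)
  exact Option.isSome_iff_exists.mpr ⟨v, evaln_mono (hs j) hv⟩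

end Paper

/-- Jockusch: any `f` dominating every total computable function
computes a list of the computable functions: an `f`-computable `x` whose columns
`x^[n] = fun k => x (Nat.pair n k)` are exactly the total computable functions. -/
theorem dominating_computes_list_of_computable (f : ℕ → ℕ)
    (hdom : ∀ g : ℕ → ℕ, Computable g → ∀ᶠ i in Filter.atTop, g i ≤ f i) :
    ∃ x : ℕ → ℕ, Paper.TRed x f ∧
      ∀ g : ℕ → ℕ, Computable g ↔ ∃ n, ∀ k, x (Nat.pair n k) = g k := by
  refine ⟨Paper.listing f, Paper.tred_listing f, fun g => ⟨fun hg => ?_, ?_⟩⟩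
  · obtain ⟨p, rfl⟩ := Paper.exists_column_eq_of_computable hdom hg
    exact ⟨encode p, fun k => by simp only [Paper.listing, Nat.unpair_pair, ofNat_encode]⟩
  · rintro ⟨n, hn⟩
    exact (Paper.computable_column f _).of_eq fun k => by
      simpa only [Paper.listing, Nat.unpair_pair] using hn k
end

section
/- The ω-closure operator cl satisfies: cl(∅) = ∅, A ⊆ cl(A), A ⊆ B implies cl(A) ⊆ cl(B), cl(A ∪ B) = cl(A) ∪ cl(B), and cl(cl(A)) = cl(A). -/
namespace Paper

/-- `A ⊆ ω^{<ω}` is ω-big above `τ`: there is a well-founded tree with stem `τ`,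
all of whose non-leaf nodes extending the stem have infinitely many children, and
all of whose leaves lie in `A`. -/
def OmegaBig (A : Set (List ℕ)) (τ : List ℕ) : Prop :=
  ∃ T : Set (List ℕ),
    (∀ σ ∈ T, ∀ ρ : List ℕ, ρ <+: σ → ρ ∈ T) ∧
    τ ∈ T ∧
    (∀ σ ∈ T, σ <+: τ ∨ τ <+: σ) ∧
    (∀ x : ℕ → ℕ, ∃ n, (List.range n).map x ∉ T) ∧
    (∀ σ ∈ T, τ <+: σ → (∃ m, σ ++ [m] ∈ T) → {m | σ ++ [m] ∈ T}.Infinite) ∧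
    (∀ σ ∈ T, (∀ m, σ ++ [m] ∉ T) → σ ∈ A)

/-- The ω-closure operator. -/
def cl (A : Set (List ℕ)) : Set (List ℕ) := {τ | OmegaBig A τ}

end Paper

namespace ClAux

open List

lemma prefix_snoc {ρ l : List ℕ} {a : ℕ} (h : ρ <+: l ++ [a]) : ρ <+: l ∨ ρ = l ++ [a] := by
  rcases le_or_gt ρ.length l.length with hl | hl
  · exact Or.inl (List.prefix_of_prefix_length_le h (List.prefix_append l [a]) hl)
  · right
    apply h.eq_of_length
    have := h.length_le
    simp at this ⊢
    omega

lemma seg_mono (x : ℕ → ℕ) {m n : ℕ} (h : m ≤ n) :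
    (List.range m).map x <+: (List.range n).map x := by
  have : ((List.range n).map x).take m = (List.range m).map x := by
    rw [← List.map_take, List.take_range, min_eq_left h]
  rw [← this]; exact List.take_prefix _ _

/-- Bar induction on a well-founded tree. -/
lemma big_induction {T : Set (List ℕ)} {τ : List ℕ}
    (hpre : ∀ σ ∈ T, ∀ ρ : List ℕ, ρ <+: σ → ρ ∈ T)
    (hτ : τ ∈ T)
    (hwf : ∀ x : ℕ → ℕ, ∃ n, (List.range n).map x ∉ T)
    (P : List ℕ → Prop)
    (step : ∀ σ ∈ T, τ <+: σ → (∀ m, σ ++ [m] ∈ T → P (σ ++ [m])) → P σ) :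
    P τ := by
  by_contra hP
  classical
  set Q : List ℕ → Prop := fun σ => σ ∈ T ∧ τ <+: σ ∧ ¬ P σ with hQ
  have step' : ∀ σ, Q σ → ∃ m, Q (σ ++ [m]) := by
    rintro σ ⟨h1, h2, h3⟩
    by_contra hc
    push_neg at hc
    refine h3 (step σ h1 h2 fun m hm => ?_)
    by_contra hpm
    exact hc m ⟨hm, h2.trans (List.prefix_append _ _), hpm⟩
  choose F hF using step'
  let g : ℕ → {σ : List ℕ // Q σ} := fun n =>
    Nat.rec ⟨τ, hτ, List.prefix_rfl, hP⟩ (fun _ p => ⟨p.1 ++ [F p.1 p.2], hF p.1 p.2⟩) n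
  have hglen : ∀ n, (g n).1.length = τ.length + n := by
    intro n; induction n with
    | zero => rfl
    | succ k ih => show ((g k).1 ++ _).length = _; simp [ih]; omega
  have hgchain : ∀ {i j : ℕ}, i ≤ j → (g i).1 <+: (g j).1 := by
    intro i j h
    induction j with
    | zero => simp_all
    | succ k ih =>
      rcases Nat.lt_or_ge i (k+1) with h' | h'
      · exact (ih (by omega)).trans ⟨[F (g k).1 (g k).2], rfl⟩
      · have : i = k + 1 := by omega
        subst this; exact List.prefix_rfl
  set x : ℕ → ℕ := fun n => ((g (n+1)).1).getD n 0 with hx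
  have key : ∀ n, (List.range n).map x = ((g n).1).take n := by
    intro n
    apply List.ext_getElem
    · simp [hglen n]
    · intro i h1 h2
      simp only [List.getElem_map, List.getElem_range, List.getElem_take]
      have hilen : i < ((g (i+1)).1).length := by
        have := hglen (i+1); omega
      have hn : i < n := by simpa using h1
      have hpref := hgchain (show i + 1 ≤ n by omega)
      rw [hx]
      simp only [List.getD_eq_getElem _ _ hilen]
      exact hpref.getElem hilen
  obtain ⟨n, hn⟩ := hwf x
  refine hn ?_
  rw [key n]
  exact hpre _ (g n).2.1 _ (List.take_prefix _ _)

lemma mem_big {A : Set (List ℕ)} {τ : List ℕ} (h : τ ∈ A) : Paper.OmegaBig A τ := by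
  refine ⟨{ρ | ρ <+: τ}, ?_, List.prefix_rfl, ?_, ?_, ?_, ?_⟩
  · intro σ hσ ρ hρ; exact hρ.trans hσ
  · intro σ hσ; exact Or.inl hσ
  · intro x
    refine ⟨τ.length + 1, fun hc => ?_⟩
    have := List.IsPrefix.length_le hc
    simp at this
  · rintro σ hσ hext ⟨m, hm⟩
    exfalso
    have h1 : σ = τ := hσ.eq_of_length (le_antisymm hσ.length_le hext.length_le)
    subst h1
    have := List.IsPrefix.length_le hm
    simp at this
  · rintro σ ⟨t, rfl⟩ hleaf
    cases t with
    | nil => simpa using h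
    | cons a t' => exact absurd ⟨t', by simp⟩ (hleaf a)

lemma glue {A : Set (List ℕ)} {σ : List ℕ} {S : Set ℕ} (hS : S.Infinite)
    (h : ∀ m ∈ S, Paper.OmegaBig A (σ ++ [m])) : Paper.OmegaBig A σ := by
  classical
  have h' : ∀ m : S, Paper.OmegaBig A (σ ++ [(m : ℕ)]) := fun m => h m.1 m.2
  choose T h1 h2 h3 h4 h5 h6 using h'
  have pin : ∀ (m' : S) (ρ : List ℕ), ρ ∈ T m' → ∀ c : ℕ, σ ++ [c] <+: ρ → (m' : ℕ) = c := by
    intro m' ρ hρ c hc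
    have hlc : σ.length + 1 ≤ ρ.length := by
      have := hc.length_le; simpa using this
    have hkey : σ ++ [(m' : ℕ)] <+: ρ := by
      rcases h3 m' ρ hρ with hp | hp
      · have : ρ = σ ++ [(m' : ℕ)] := hp.eq_of_length (le_antisymm hp.length_le (by simp; omega))
        rw [this]
      · exact hp
    have : σ ++ [(m' : ℕ)] = σ ++ [c] :=
      (List.prefix_of_prefix_length_le hkey hc (by simp)).eq_of_length (by simp)
    simpa using this
  refine ⟨{ρ | ∃ m : S, ρ ∈ T m}, ?_, ?_, ?_, ?_, ?_, ?_⟩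
  · rintro ρ ⟨m, hm⟩ ρ' hρ'
    exact ⟨m, h1 m ρ hm ρ' hρ'⟩
  · obtain ⟨m0, hm0⟩ := hS.nonempty
    exact ⟨⟨m0, hm0⟩, h1 _ _ (h2 ⟨m0, hm0⟩) σ (List.prefix_append _ _)⟩
  · rintro ρ ⟨m, hm⟩
    rcases h3 m ρ hm with hp | hp
    · rcases prefix_snoc hp with h' | h'
      · exact Or.inl h'
      · exact Or.inr (h' ▸ List.prefix_append _ _)
    · exact Or.inr ((List.prefix_append σ [(m : ℕ)]).trans hp)
  · intro x
    set s := σ.length with hs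
    by_cases hmem : (List.range (s+1)).map x ∈ {ρ | ∃ m : S, ρ ∈ T m}
    · obtain ⟨m, hm⟩ := hmem
      have heq : (List.range (s+1)).map x = σ ++ [(m : ℕ)] := by
        rcases h3 m _ hm with hp | hp
        · exact hp.eq_of_length (by simp [hs])
        · exact (hp.eq_of_length (by simp [hs])).symm
      obtain ⟨n, hn⟩ := h4 m x
      refine ⟨max n (s+1), ?_⟩
      rintro ⟨m', hm'⟩
      have hpre2 : σ ++ [(m : ℕ)] <+: (List.range (max n (s+1))).map x :=
        heq ▸ seg_mono x (le_max_right _ _)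
      have hmm : (m' : ℕ) = (m : ℕ) := pin m' _ hm' _ hpre2
      have hm'm : m' = m := Subtype.ext hmm
      subst hm'm
      exact hn (h1 m' _ hm' _ (seg_mono x (le_max_left _ _)))
    · exact ⟨s+1, hmem⟩
  · rintro ρ ⟨m, hm⟩ hσρ hex
    by_cases hρσ : ρ = σ
    · subst hρσ
      refine hS.mono fun k hk => ?_
      exact ⟨⟨k, hk⟩, h2 ⟨k, hk⟩⟩
    · have hstem : σ ++ [(m : ℕ)] <+: ρ := by
        rcases h3 m ρ hm with hp | hp
        · rcases prefix_snoc hp with h' | h'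
          · exact absurd (h'.eq_of_length (le_antisymm h'.length_le hσρ.length_le)) hρσ
          · rw [h']
        · exact hp
      have hdir : ∀ k : ℕ, (∃ m' : S, ρ ++ [k] ∈ T m') → ρ ++ [k] ∈ T m := by
        rintro k ⟨m', hm'⟩
        have : (m' : ℕ) = (m : ℕ) :=
          pin m' _ hm' _ (hstem.trans (List.prefix_append _ _))
        have hm'm : m' = m := Subtype.ext this
        subst hm'm
        exact hm'
      have hex' : ∃ k, ρ ++ [k] ∈ T m := by
        obtain ⟨k, hk⟩ := hex
        exact ⟨k, hdir k hk⟩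
      exact (h5 m ρ hm hstem hex').mono fun k hk => ⟨m, hk⟩
  · rintro ρ ⟨m, hm⟩ hleaf
    exact h6 m ρ hm fun k hk => hleaf k ⟨m, hk⟩

end ClAux

/-- the ω-closure operator satisfies `cl(∅) = ∅`, extensivity,
monotonicity, commutation with binary unions, and idempotence. -/
theorem cl_properties :
    Paper.cl ∅ = ∅ ∧
    (∀ A : Set (List ℕ), A ⊆ Paper.cl A) ∧
    (∀ A B : Set (List ℕ), A ⊆ B → Paper.cl A ⊆ Paper.cl B) ∧
    (∀ A B : Set (List ℕ), Paper.cl (A ∪ B) = Paper.cl A ∪ Paper.cl B) ∧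
    (∀ A : Set (List ℕ), Paper.cl (Paper.cl A) = Paper.cl A) := by
  classical
  have mono : ∀ A B : Set (List ℕ), A ⊆ B → Paper.cl A ⊆ Paper.cl B := by
    rintro A B hAB τ ⟨T, p1, p2, p3, p4, p5, p6⟩
    exact ⟨T, p1, p2, p3, p4, p5, fun σ hσ hl => hAB (p6 σ hσ hl)⟩
  refine ⟨?_, fun A τ h => ClAux.mem_big h, mono, ?_, ?_⟩
  · ext τ
    simp only [Set.mem_empty_iff_false, iff_false]
    rintro ⟨T, p1, p2, p3, p4, p5, p6⟩
    exact ClAux.big_induction p1 p2 p4 (fun _ => False)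
      (fun σ hσ _ ih => p6 σ hσ fun m hm => ih m hm)
  · intro A B
    apply Set.Subset.antisymm
    · rintro τ ⟨T, p1, p2, p3, p4, p5, p6⟩
      have : Paper.OmegaBig A τ ∨ Paper.OmegaBig B τ := by
        refine ClAux.big_induction p1 p2 p4
          (fun σ => Paper.OmegaBig A σ ∨ Paper.OmegaBig B σ) ?_
        intro σ hσ hext ih
        by_cases hc : ∃ m, σ ++ [m] ∈ T
        · have hinf := p5 σ hσ hext hc
          have hsub : {m | σ ++ [m] ∈ T} ⊆
              {m | σ ++ [m] ∈ T ∧ Paper.OmegaBig A (σ ++ [m])} ∪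
              {m | σ ++ [m] ∈ T ∧ Paper.OmegaBig B (σ ++ [m])} := by
            intro m hm
            rcases ih m hm with h | h
            exacts [Or.inl ⟨hm, h⟩, Or.inr ⟨hm, h⟩]
          rcases Set.infinite_union.1 (hinf.mono hsub) with h | h
          · exact Or.inl (ClAux.glue h fun m hm => hm.2)
          · exact Or.inr (ClAux.glue h fun m hm => hm.2)
        · push_neg at hc
          rcases p6 σ hσ hc with h | h
          exacts [Or.inl (ClAux.mem_big h), Or.inr (ClAux.mem_big h)]
      exact this
    · exact Set.union_subset (mono A (A ∪ B) Set.subset_union_left)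
        (mono B (A ∪ B) Set.subset_union_right)
  · intro A
    apply Set.Subset.antisymm
    · rintro τ ⟨T, p1, p2, p3, p4, p5, p6⟩
      refine ClAux.big_induction p1 p2 p4 (Paper.OmegaBig A) ?_
      intro σ hσ hext ih
      by_cases hc : ∃ m, σ ++ [m] ∈ T
      · exact ClAux.glue (p5 σ hσ hext hc) fun m hm => ih m hm
      · push_neg at hc
        exact p6 σ hσ hc
    · exact fun τ h => ClAux.mem_big h
end

section
/- For every condition (τ, S, r) of the measure-theoretic forcing ℙ and every d > 0, there is a condition (τ_d, S_d, r) ≤ (τ, S, r) with S_d ⊆ S and r − λ(Û(τ_d)) ≤ d, where Û(τ) denotes the finite union of basic clopen sets coded by the entries of τ. -/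
open Filter MeasureTheory

namespace Paper

/-- Cantor space, viewed as the compact group `(ℤ/2)^ω` (so that bitwise XOR is addition). -/
abbrev Cantor := ℕ → ZMod 2

/-- The fair-coin (Lebesgue) measure on Cantor space: normalized Haar measure. -/
noncomputable def lam : Measure Cantor :=
  (Measure.addHaar (Set.univ : Set Cantor))⁻¹ • Measure.addHaar

/-- The basic clopen set determined by a finite binary string. -/
def cyl (σ : List (ZMod 2)) : Set Cantor := {x | ∀ i : Fin σ.length, x i = σ.get i}

noncomputable instance : Encodable (ZMod 2) := Fintype.toEncodable _

noncomputable instance : Denumerable (List (ZMod 2)) :=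
  Denumerable.ofEncodableOfInfinite _

/-- A fixed bijection `ℕ → 2^{<ω}`. -/
noncomputable def strOf (n : ℕ) : List (ZMod 2) := Denumerable.ofNat _ n

/-- The open set named by `f ∈ ω^ω`. -/
def opn (f : ℕ → ℕ) : Set Cantor := ⋃ n, cyl (strOf (f n))

/-- The finite union of basic clopen sets coded by the entries of a finite string `σ`. -/
def Uhat (σ : List ℕ) : Set Cantor := ⋃ i : Fin σ.length, cyl (strOf (σ.get i))

/-- Prepending a finite string to an element of Cantor space. -/
def app (σ : List (ZMod 2)) (x : Cantor) : Cantor :=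
  fun n => if h : n < σ.length then σ.get ⟨n, h⟩ else x (n - σ.length)

/-- Bitwise XOR of a finite string with an element of Cantor space. -/
def xorL (σ : List (ZMod 2)) (x : Cantor) : Cantor :=
  fun n => (if h : n < σ.length then σ.get ⟨n, h⟩ else 0) + x n

/-- `A` is a tail set. -/
def IsTailSet (A : Set Cantor) : Prop :=
  ∀ σ τ : List (ZMod 2), σ.length = τ.length → ∀ x : Cantor, app σ x ∈ A → app τ x ∈ A

/-- A fixed bijection `ℕ → ℚ`. -/
def ratOf (n : ℕ) : ℚ := Denumerable.ofNat ℚ n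

/-- `a` is a fast-Cauchy name for the real `r`. -/
def RealName (a : ℕ → ℕ) (r : ℝ) : Prop :=
  Tendsto (fun i => (ratOf (a i) : ℝ)) atTop (nhds r) ∧
    ∀ i j : ℕ, i < j → |(ratOf (a i) : ℝ) - (ratOf (a j) : ℝ)| < (2 : ℝ) ^ (-(i : ℤ))

/-- The `n`-th column of `x`. -/
def col (x : ℕ → ℕ) (n : ℕ) : ℕ → ℕ := fun k => x (Nat.pair n k)

/-- The name of the `n`-th open set coded in a Schnorr name `x`. -/
def nm (x : ℕ → ℕ) (n : ℕ) : ℕ → ℕ := col x (2 * n)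

/-- The name of the measure of the `n`-th open set coded in a Schnorr name `x`. -/
def mv (x : ℕ → ℕ) (n : ℕ) : ℕ → ℕ := col x (2 * n + 1)

/-- `x` is a name for the Schnorr null set `N`. -/
def SchnorrName (x : ℕ → ℕ) (N : Set Cantor) : Prop :=
  N = (⋂ n, opn (nm x n)) ∧
    (∀ n, RealName (mv x n) ((lam (opn (nm x n))).toReal)) ∧
    Tendsto (fun n => lam (opn (nm x n))) atTop (nhds 0)

end Paper

namespace Paper

/-- The set of names of open sets of measure exactly `q`. -/
def Rset (q : ℝ) : Set (ℕ → ℕ) := {f | lam (opn f) = ENNReal.ofReal q}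

/-- Conditions of the measure-theoretic forcing `ℙ` (definability constraints dropped). -/
def IsCond (σ : List ℕ) (R : Set (ℕ → ℕ)) (q : ℝ) : Prop :=
  0 < q ∧ q < 1 / 2 ∧ R.Nonempty ∧ R ⊆ Rset q ∧ ∀ f ∈ R, Uhat σ ⊆ opn f

/-- The extension relation of `ℙ`: `(τ, S, r) ≤ (σ, R, q)`. -/
def Ext (τ : List ℕ) (S : Set (ℕ → ℕ)) (r : ℝ)
    (σ : List ℕ) (R : Set (ℕ → ℕ)) (q : ℝ) : Prop :=
  σ <+: τ ∧ ∀ f ∈ S, ∃ g ∈ R, opn g ⊆ opn f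

end Paper

/-!
Fix `f ∈ S`. The finite unions of the first `N` basic clopen sets of `U(f)` increase to `U(f)`,
so by continuity of measure from below their measures tend to `λ(U(f)) = r`. Appending the codes
of the first `N` of them to `τ`, for `N` large, gives a stem `τ_d` with `Û(τ_d) ⊆ U(f)` and
`λ(Û(τ_d)) > r - d`; keeping only those `g ∈ S` with `Û(τ_d) ⊆ U(g)` yields the extension.
-/

namespace Paper

open Set

theorem mem_Uhat {σ : List ℕ} {x : Cantor} : x ∈ Uhat σ ↔ ∃ m ∈ σ, x ∈ cyl (strOf m) := by
  simp only [Uhat, mem_iUnion, List.mem_iff_get]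
  constructor
  · rintro ⟨i, hi⟩
    exact ⟨σ.get i, ⟨i, rfl⟩, hi⟩
  · rintro ⟨m, ⟨i, rfl⟩, hm⟩
    exact ⟨i, hm⟩

theorem Uhat_append (σ τ : List ℕ) : Uhat (σ ++ τ) = Uhat σ ∪ Uhat τ := by
  ext x
  simp only [mem_union, mem_Uhat, List.mem_append, or_and_right, exists_or]

theorem mem_Uhat_ofFn {f : ℕ → ℕ} {N : ℕ} {x : Cantor} :
    x ∈ Uhat (List.ofFn fun i : Fin N => f i) ↔ ∃ n < N, x ∈ cyl (strOf (f n)) := by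
  simp only [mem_Uhat, List.mem_ofFn', mem_range]
  constructor
  · rintro ⟨_, ⟨i, rfl⟩, hx⟩
    exact ⟨i, i.isLt, hx⟩
  · rintro ⟨n, hn, hx⟩
    exact ⟨f n, ⟨⟨n, hn⟩, rfl⟩, hx⟩

theorem monotone_Uhat_ofFn (f : ℕ → ℕ) :
    Monotone fun N => Uhat (List.ofFn fun i : Fin N => f i) := by
  intro M N hMN x hx
  obtain ⟨n, hn, hx⟩ := mem_Uhat_ofFn.mp hx
  exact mem_Uhat_ofFn.mpr ⟨n, hn.trans_le hMN, hx⟩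

theorem iUnion_Uhat_ofFn (f : ℕ → ℕ) :
    ⋃ N, Uhat (List.ofFn fun i : Fin N => f i) = opn f := by
  ext x
  simp only [mem_iUnion, mem_Uhat_ofFn, opn]
  constructor
  · rintro ⟨N, n, -, hx⟩
    exact ⟨n, hx⟩
  · rintro ⟨n, hx⟩
    exact ⟨n + 1, n, n.lt_succ_self, hx⟩

theorem Uhat_ofFn_subset_opn (f : ℕ → ℕ) (N : ℕ) :
    Uhat (List.ofFn fun i : Fin N => f i) ⊆ opn f :=
  (subset_iUnion (fun N => Uhat (List.ofFn fun i : Fin N => f i)) N).trans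
    (iUnion_Uhat_ofFn f).subset

theorem tendsto_measure_Uhat_ofFn (μ : Measure Cantor) (f : ℕ → ℕ) :
    Tendsto (fun N => μ (Uhat (List.ofFn fun i : Fin N => f i))) atTop (nhds (μ (opn f))) := by
  rw [← iUnion_Uhat_ofFn f]
  exact tendsto_measure_iUnion_atTop (monotone_Uhat_ofFn f)

theorem exists_lt_toReal_measure_Uhat_ofFn {μ : Measure Cantor} {f : ℕ → ℕ}
    (hf : μ (opn f) ≠ ⊤) {a : ℝ} (ha : a < (μ (opn f)).toReal) :
    ∃ N, a < (μ (Uhat (List.ofFn fun i : Fin N => f i))).toReal :=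
  (((ENNReal.tendsto_toReal hf).comp (tendsto_measure_Uhat_ofFn μ f)).eventually
    (eventually_gt_nhds ha)).exists

theorem IsCond.restrict {σ σ' : List ℕ} {R : Set (ℕ → ℕ)} {q : ℝ} (h : IsCond σ R q)
    {f : ℕ → ℕ} (hf : f ∈ R) (hσ' : Uhat σ' ⊆ opn f) :
    IsCond σ' {g ∈ R | Uhat σ' ⊆ opn g} q :=
  ⟨h.1, h.2.1, ⟨f, hf, hσ'⟩, (sep_subset _ _).trans h.2.2.2.1, fun _ hg => hg.2⟩

theorem ext_restrict {σ σ' : List ℕ} (hσ : σ <+: σ') (R : Set (ℕ → ℕ)) (q : ℝ) :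
    Ext σ' {g ∈ R | Uhat σ' ⊆ opn g} q σ R q :=
  ⟨hσ, fun g hg => ⟨g, hg.1, subset_rfl⟩⟩

end Paper

open Paper

/-- every condition `(τ, S, r)` of `ℙ` can be extended, for any
`d > 0`, to a condition `(τ_d, S_d, r)` with `S_d ⊆ S` and `r − λ(Û(τ_d)) ≤ d`. -/
theorem stem_almost_exhausts_measure (τ : List ℕ) (S : Set (ℕ → ℕ)) (r : ℝ)
    (hcond : Paper.IsCond τ S r) (d : ℝ) (hd : 0 < d) :
    ∃ (τd : List ℕ) (Sd : Set (ℕ → ℕ)), Paper.IsCond τd Sd r ∧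
      Paper.Ext τd Sd r τ S r ∧ Sd ⊆ S ∧
      r - (Paper.lam (Paper.Uhat τd)).toReal ≤ d := by
  obtain ⟨f, hf⟩ := hcond.2.2.1
  have hfr : lam (opn f) = ENNReal.ofReal r := hcond.2.2.2.1 hf
  have hfin : lam (opn f) ≠ ⊤ := hfr ▸ ENNReal.ofReal_ne_top
  obtain ⟨N, hN⟩ := exists_lt_toReal_measure_Uhat_ofFn hfin (a := r - d)
    (by rw [hfr, ENNReal.toReal_ofReal hcond.1.le]; linarith)
  set τd := τ ++ List.ofFn fun i : Fin N => f i
  have hτd : Uhat τd ⊆ opn f := by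
    rw [Uhat_append]
    exact Set.union_subset (hcond.2.2.2.2 f hf) (Uhat_ofFn_subset_opn f N)
  refine ⟨τd, {g ∈ S | Uhat τd ⊆ opn g}, hcond.restrict hf hτd,
    ext_restrict (List.prefix_append _ _) S r, Set.sep_subset _ _, ?_⟩
  have hle : (lam (Uhat (List.ofFn fun i : Fin N => f i))).toReal ≤ (lam (Uhat τd)).toReal :=
    ENNReal.toReal_mono (ne_top_of_le_ne_top hfin (measure_mono hτd))
      (measure_mono (Uhat_append τ _ ▸ Set.subset_union_right))
  linarith
end

section
/- In the forcing ℙ of measure-1/2 open-set names: for any condition (σ, R, q), any sequence ⟨(f_i, λ_i)⟩ naming a Schnorr null set N = ⋂_i U(f_i), and any i with 2^{-i} + q < 1/2, the triple (σ, S, q + 2^{-i}) with S = {g ∈ R_{q+2^{-i}} : Û(σ) ∪ U(f_i) ⊆ U(g) and ∃h ∈ R, U(h) ⊆ U(g)} is a condition extending (σ, R, q); in particular S is nonempty. -/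
open Filter MeasureTheory

/-!
An open set of measure at most `t ≤ 1` can be enlarged to an open set of measure exactly `t`:
greedily add basic cylinders, each covering between half and all of what is still missing, so
the gap shrinks geometrically. Applied to `U(h) ∪ U(f_i)` for some `h ∈ R`, whose measure is at
most `q + 2^{-i}`, this produces an element of `S`.
-/

open scoped ENNReal

theorem MeasureTheory.exists_measure_union_iUnion_eq {α ι : Type*} [MeasurableSpace α]
    (μ : Measure α) {s : ι → Set α} (hs : ∀ i, MeasurableSet (s i)) {W : Set α}
    (hW : MeasurableSet W) {t : ℝ≥0∞} (ht : t ≠ ∞) (hWt : μ W ≤ t)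
    (hstep : ∀ E, W ⊆ E → MeasurableSet E → μ E ≤ t →
      ∃ i, μ (E ∪ s i) ≤ t ∧ t - μ (E ∪ s i) ≤ (t - μ E) / 2) :
    ∃ c : ℕ → ι, μ (W ∪ ⋃ k, s (c k)) = t := by
  have : Nonempty ι := let ⟨i, _⟩ := hstep W subset_rfl hW hWt; ⟨i⟩
  choose! c hc_le hc_gap using hstep
  let E : ℕ → Set α := fun k => Nat.rec W (fun _ E => E ∪ s (c E)) k
  have hinv : ∀ k, W ⊆ E k ∧ MeasurableSet (E k) ∧ μ (E k) ≤ t ∧ t - μ (E k) ≤ 2⁻¹ ^ k * t := by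
    intro k
    induction k with
    | zero => exact ⟨subset_rfl, hW, hWt, by simp⟩
    | succ k ih =>
      obtain ⟨hWE, hEm, hEt, hgap⟩ := ih
      refine ⟨hWE.trans Set.subset_union_left, hEm.union (hs _), hc_le _ hWE hEm hEt, ?_⟩
      calc t - μ (E (k + 1)) ≤ (t - μ (E k)) / 2 := hc_gap _ hWE hEm hEt
        _ ≤ 2⁻¹ ^ k * t / 2 := by gcongr
        _ = 2⁻¹ ^ (k + 1) * t := by rw [ENNReal.div_eq_inv_mul, pow_succ', mul_assoc]
  have hmono : Monotone E := monotone_nat_of_le_succ fun k => Set.subset_union_left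
  have hunion : W ∪ ⋃ k, s (c (E k)) = ⋃ k, E k := by
    refine Set.Subset.antisymm (Set.union_subset (Set.subset_iUnion E 0)
      (Set.iUnion_mono' fun k => ⟨k + 1, Set.subset_union_right⟩)) (Set.iUnion_subset fun k => ?_)
    induction k with
    | zero => exact Set.subset_union_left
    | succ k ih =>
      exact Set.union_subset ih
        (Set.subset_union_of_subset_right (Set.subset_iUnion (fun j => s (c (E j))) k) _)
  refine ⟨fun k => c (E k), ?_⟩
  rw [hunion, hmono.measure_iUnion]
  refine le_antisymm (iSup_le fun k => (hinv k).2.2.1) (tsub_eq_zero_iff_le.mp ?_)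
  have hlim : Tendsto (fun k : ℕ => 2⁻¹ ^ k * t) atTop (nhds 0) := by
    simpa using ENNReal.Tendsto.mul_const
      (ENNReal.tendsto_pow_atTop_nhds_zero_iff.mpr (by norm_num)) (Or.inr ht)
  exact nonpos_iff_eq_zero.mp (ge_of_tendsto' hlim fun k =>
    (tsub_le_tsub_left (le_iSup (fun j => μ (E j)) k) t).trans (hinv k).2.2.2)

namespace Paper

theorem mem_cyl_iff {τ : List (ZMod 2)} {x : Cantor} :
    x ∈ cyl τ ↔ ∀ i (hi : i < τ.length), x i = τ[i] :=
  ⟨fun h i hi => h ⟨i, hi⟩, fun h i => h i i.2⟩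

theorem measurableSet_cyl (τ : List (ZMod 2)) : MeasurableSet (cyl τ) := by
  have : cyl τ = ⋂ i : Fin τ.length, (fun x : Cantor => x i) ⁻¹' {τ.get i} := by
    ext x; simp [cyl]
  rw [this]
  exact .iInter fun i => measurable_pi_apply _ (measurableSet_singleton _)

theorem cyl_nil : cyl [] = Set.univ :=
  Set.eq_univ_of_forall fun _ i => i.elim0

instance : IsProbabilityMeasure lam :=
  ⟨by simp [lam]⟩

theorem mem_cyl_append {τ : List (ZMod 2)} {b : ZMod 2} {x : Cantor} :
    x ∈ cyl (τ ++ [b]) ↔ x ∈ cyl τ ∧ x τ.length = b := by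
  simp only [mem_cyl_iff, List.length_append, List.length_singleton, Nat.lt_succ_iff_lt_or_eq]
  constructor
  · intro h
    exact ⟨fun i hi => by simpa [List.getElem_append_left hi] using h i (.inl hi),
      by simpa using h _ (.inr rfl)⟩
  · rintro ⟨h, hb⟩ i (hi | rfl)
    · simpa [List.getElem_append_left hi] using h i hi
    · simpa using hb

theorem cyl_eq_union_append (τ : List (ZMod 2)) :
    cyl τ = cyl (τ ++ [0]) ∪ cyl (τ ++ [1]) := by
  ext x
  simp only [Set.mem_union, mem_cyl_append, ← and_or_left, iff_self_and]
  exact fun _ => (by decide : ∀ b : ZMod 2, b = 0 ∨ b = 1) _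

theorem disjoint_cyl_append (τ : List (ZMod 2)) :
    Disjoint (cyl (τ ++ [0])) (cyl (τ ++ [1])) :=
  Set.disjoint_left.mpr fun x h₀ h₁ => by
    have := (mem_cyl_append.mp h₀).2.symm.trans (mem_cyl_append.mp h₁).2
    exact absurd this (by decide)

theorem lam_cyl_append_one (τ : List (ZMod 2)) :
    lam (cyl (τ ++ [1])) = lam (cyl (τ ++ [0])) := by
  have hflip : (Pi.single τ.length 1 + ·) ⁻¹' cyl (τ ++ [1]) = cyl (τ ++ [0]) := by
    ext x
    simp only [Set.mem_preimage, mem_cyl_append]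
    simp only [mem_cyl_iff, Pi.add_apply, Pi.single_eq_same]
    refine and_congr (forall₂_congr fun i hi => ?_) add_eq_left
    rw [Pi.single_eq_of_ne hi.ne, zero_add]
  rw [← hflip]
  simp [lam, measure_preimage_add]

theorem lam_cyl (τ : List (ZMod 2)) : lam (cyl τ) = 2⁻¹ ^ τ.length := by
  induction τ using List.reverseRecOn with
  | nil => simp [cyl_nil]
  | append_singleton τ b ih =>
    have hsplit : lam (cyl τ) = 2 * lam (cyl (τ ++ [0])) := by
      rw [two_mul, cyl_eq_union_append, measure_union (disjoint_cyl_append τ)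
        (measurableSet_cyl _), lam_cyl_append_one]
    have hb : lam (cyl (τ ++ [b])) = lam (cyl (τ ++ [0])) := by
      rcases (by decide : ∀ b : ZMod 2, b = 0 ∨ b = 1) b with rfl | rfl
      · rfl
      · exact lam_cyl_append_one τ
    rw [hb, List.length_append, List.length_singleton, pow_succ, ← ih, hsplit, mul_comm,
      ← mul_assoc, ENNReal.inv_mul_cancel two_ne_zero ENNReal.ofNat_ne_top, one_mul]

theorem exists_lam_cyl_diff_le_two_mul_append (E : Set Cantor) (hE : MeasurableSet E)
    (τ : List (ZMod 2)) : ∃ b, lam (cyl τ \ E) ≤ 2 * lam (cyl (τ ++ [b]) \ E) := by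
  have hsplit : lam (cyl τ \ E) = lam (cyl (τ ++ [0]) \ E) + lam (cyl (τ ++ [1]) \ E) := by
    rw [cyl_eq_union_append τ, Set.union_sdiff_distrib, measure_union
      ((disjoint_cyl_append τ).mono Set.sdiff_subset Set.sdiff_subset)
      ((measurableSet_cyl _).diff hE)]
  rcases le_total (lam (cyl (τ ++ [0]) \ E)) (lam (cyl (τ ++ [1]) \ E)) with h | h
  · exact ⟨1, by rw [hsplit, two_mul]; gcongr⟩
  · exact ⟨0, by rw [hsplit, two_mul]; gcongr⟩

-- Walk down the tree of cylinders, always into the child with more mass outside `E`, and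
-- stop at the first node whose mass outside `E` is at most `δ`; its parent had more than `δ`.
theorem exists_cyl_diff_le_le_two_mul (E : Set Cantor) (hE : MeasurableSet E) {δ : ℝ≥0∞}
    (hδ : δ ≠ 0) (hδE : δ ≤ lam Eᶜ) :
    ∃ τ, lam (cyl τ \ E) ≤ δ ∧ δ ≤ 2 * lam (cyl τ \ E) := by
  have descend : ∀ n τ, 2⁻¹ ^ (τ.length + n) ≤ δ → δ ≤ 2 * lam (cyl τ \ E) →
      ∃ τ', lam (cyl τ' \ E) ≤ δ ∧ δ ≤ 2 * lam (cyl τ' \ E) := by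
    intro n
    induction n with
    | zero =>
      intro τ hτ hδτ
      exact ⟨τ, (measure_mono Set.sdiff_subset).trans ((lam_cyl τ).trans_le hτ), hδτ⟩
    | succ n ih =>
      intro τ hτ hδτ
      by_cases hle : lam (cyl τ \ E) ≤ δ
      · exact ⟨τ, hle, hδτ⟩
      obtain ⟨b, hb⟩ := exists_lam_cyl_diff_le_two_mul_append E hE τ
      exact ih (τ ++ [b]) (by simpa [add_assoc, add_comm 1 n] using hτ)
        ((not_le.mp hle).le.trans hb)
  obtain ⟨n, hn⟩ := ENNReal.exists_inv_two_pow_lt hδ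
  refine descend n [] (by simpa using hn.le) ?_
  rw [cyl_nil, ← Set.compl_eq_univ_sdiff]
  exact hδE.trans (le_mul_of_one_le_left' one_le_two)

theorem exists_lam_union_cyl_le_and_gap_le_half {t : ℝ≥0∞} (ht : t ≤ 1) {τ₀ : List (ZMod 2)}
    {E : Set Cantor} (hE : MeasurableSet E) (hτ₀ : cyl τ₀ ⊆ E) (hEt : lam E ≤ t) :
    ∃ τ, lam (E ∪ cyl τ) ≤ t ∧ t - lam (E ∪ cyl τ) ≤ (t - lam E) / 2 := by
  set δ := t - lam E
  rcases eq_or_ne δ 0 with hδ | hδ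
  · refine ⟨τ₀, ?_⟩
    rw [Set.union_eq_self_of_subset_right hτ₀, hδ]
    exact ⟨hEt, hδ.le.trans zero_le⟩
  have hδE : δ ≤ lam Eᶜ := by
    rw [prob_compl_eq_one_sub hE]
    exact tsub_le_tsub_right ht _
  obtain ⟨τ, hle, hge⟩ := exists_cyl_diff_le_le_two_mul E hE hδ hδE
  have hunion : lam (E ∪ cyl τ) = lam E + lam (cyl τ \ E) := by
    rw [← Set.union_sdiff_self, measure_union disjoint_sdiff_self_right
      ((measurableSet_cyl τ).diff hE)]
  refine ⟨τ, ?_, ?_⟩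
  · rw [hunion, ← add_tsub_cancel_of_le hEt]
    gcongr
  · rw [hunion, ← tsub_tsub, tsub_le_iff_right]
    calc δ = δ / 2 + δ / 2 := (ENNReal.add_halves δ).symm
      _ ≤ δ / 2 + lam (cyl τ \ E) := by
        gcongr
        rwa [ENNReal.div_le_iff two_ne_zero ENNReal.ofNat_ne_top, mul_comm]

theorem strOf_surjective : Function.Surjective strOf :=
  fun τ => ⟨_, Denumerable.ofNat_encode τ⟩

theorem exists_opn_eq_iUnion_cyl (τ : ℕ → List (ZMod 2)) : ∃ g, opn g = ⋃ n, cyl (τ n) :=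
  ⟨Function.surjInv strOf_surjective ∘ τ,
    Set.iUnion_congr fun _ => congrArg cyl (Function.surjInv_eq strOf_surjective _)⟩

theorem exists_opn_eq_union (f₁ f₂ : ℕ → ℕ) : ∃ g, opn g = opn f₁ ∪ opn f₂ := by
  refine ⟨Sum.elim f₁ f₂ ∘ Equiv.natSumNatEquivNat.symm, ?_⟩
  rw [opn, Function.comp_def, Equiv.natSumNatEquivNat.symm.surjective.iUnion_comp
    (fun s => cyl (strOf (Sum.elim f₁ f₂ s))), Set.iUnion_sum]
  rfl

theorem exists_opn_superset_lam_eq (f : ℕ → ℕ) {t : ℝ≥0∞} (ht : t ≤ 1)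
    (hf : lam (opn f) ≤ t) : ∃ g, opn f ⊆ opn g ∧ lam (opn g) = t := by
  have hmeas : MeasurableSet (opn f) := .iUnion fun n => measurableSet_cyl _
  obtain ⟨c, hc⟩ := exists_measure_union_iUnion_eq lam measurableSet_cyl hmeas
    (ne_top_of_le_ne_top ENNReal.one_ne_top ht) hf fun E hfE hE hEt =>
      exists_lam_union_cyl_le_and_gap_le_half ht hE
        ((Set.subset_iUnion (fun n => cyl (strOf (f n))) 0).trans hfE) hEt
  obtain ⟨f', hf'⟩ := exists_opn_eq_iUnion_cyl c
  obtain ⟨g, hg⟩ := exists_opn_eq_union f f'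
  rw [hf'] at hg
  exact ⟨g, hg ▸ Set.subset_union_left, hg ▸ hc⟩

end Paper

theorem null_cover_extension_general (σ : List ℕ) (R : Set (ℕ → ℕ)) (q : ℝ)
    (hcond : Paper.IsCond σ R q) (x : ℕ → ℕ) (i : ℕ)
    (hnorm : Paper.lam (Paper.opn (Paper.nm x i)) ≤ ENNReal.ofReal ((2 : ℝ) ^ (-(i : ℤ))))
    (hsmall : (2 : ℝ) ^ (-(i : ℤ)) + q < 1 / 2) :
    Paper.IsCond σ
      {g ∈ Paper.Rset (q + (2 : ℝ) ^ (-(i : ℤ))) |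
        Paper.Uhat σ ∪ Paper.opn (Paper.nm x i) ⊆ Paper.opn g ∧
          ∃ h ∈ R, Paper.opn h ⊆ Paper.opn g}
      (q + (2 : ℝ) ^ (-(i : ℤ))) ∧
    Paper.Ext σ
      {g ∈ Paper.Rset (q + (2 : ℝ) ^ (-(i : ℤ))) |
        Paper.Uhat σ ∪ Paper.opn (Paper.nm x i) ⊆ Paper.opn g ∧
          ∃ h ∈ R, Paper.opn h ⊆ Paper.opn g}
      (q + (2 : ℝ) ^ (-(i : ℤ))) σ R q := by
  obtain ⟨hq, -, ⟨h, hR⟩, hRq, hσR⟩ := hcond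
  have hpos : (0 : ℝ) < 2 ^ (-(i : ℤ)) := zpow_pos two_pos _
  obtain ⟨f, hf⟩ := Paper.exists_opn_eq_union h (Paper.nm x i)
  have hf_le : Paper.lam (Paper.opn f) ≤ ENNReal.ofReal (q + 2 ^ (-(i : ℤ))) := by
    rw [hf, ENNReal.ofReal_add hq.le hpos.le, ← hRq hR]
    exact (measure_union_le _ _).trans (by gcongr)
  obtain ⟨g, hfg, hg⟩ := Paper.exists_opn_superset_lam_eq f
    (ENNReal.ofReal_le_one.mpr (by linarith)) hf_le
  rw [hf, Set.union_subset_iff] at hfg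
  refine ⟨⟨by positivity, by linarith, ⟨g, hg, ?_, h, hR, hfg.1⟩, fun _ hg' => hg'.1,
    fun _ hg' => Set.subset_union_left.trans hg'.2.1⟩, List.prefix_refl σ, fun _ hg' => hg'.2.2⟩
  exact Set.union_subset ((hσR h hR).trans hfg.1) hfg.2

/-- given a condition `(σ, R, q)`, a (normalized) Schnorr name `x`
for a null set, and `i` with `2^{-i} + q < 1/2`, the triple `(σ, S, q + 2^{-i})`
with `S = {g ∈ R_{q+2^{-i}} : Û(σ) ∪ U(f_i) ⊆ U(g) ∧ ∃ h ∈ R, U(h) ⊆ U(g)}`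
is a condition extending `(σ, R, q)`; in particular `S` is nonempty. -/
theorem null_cover_extension (σ : List ℕ) (R : Set (ℕ → ℕ)) (q : ℝ)
    (hcond : Paper.IsCond σ R q) (x : ℕ → ℕ) (N : Set Paper.Cantor)
    (hx : Paper.SchnorrName x N) (i : ℕ)
    (hnorm : Paper.lam (Paper.opn (Paper.nm x i)) ≤ ENNReal.ofReal ((2 : ℝ) ^ (-(i : ℤ))))
    (hsmall : (2 : ℝ) ^ (-(i : ℤ)) + q < 1 / 2) :
    Paper.IsCond σ
      {g ∈ Paper.Rset (q + (2 : ℝ) ^ (-(i : ℤ))) |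
        Paper.Uhat σ ∪ Paper.opn (Paper.nm x i) ⊆ Paper.opn g ∧
          ∃ h ∈ R, Paper.opn h ⊆ Paper.opn g}
      (q + (2 : ℝ) ^ (-(i : ℤ))) ∧
    Paper.Ext σ
      {g ∈ Paper.Rset (q + (2 : ℝ) ^ (-(i : ℤ))) |
        Paper.Uhat σ ∪ Paper.opn (Paper.nm x i) ⊆ Paper.opn g ∧
          ∃ h ∈ R, Paper.opn h ⊆ Paper.opn g}
      (q + (2 : ℝ) ^ (-(i : ℤ))) σ R q :=
  null_cover_extension_general σ R q hcond x i hnorm hsmall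
end
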